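/- arXiv:2407.01051 — 7 statements merged into one kernel-verified Lean document; each statement's English description precedes it below -/
import Mathlib

section
/- Let H be a real inner product space, δ₁ ≥ 0, and let g₀,…,g_T and v₀,…,v_T be vectors in H with ‖g_k − v_k‖ ≤ δ₁ for all k. Define the partial sums q_j = Σ_{k=0}^{j} g_k for 0 ≤ j ≤ T. Suppose the orthogonality relations ⟨v_j, q_{j−1}⟩ = 0 hold for all 1 ≤ j ≤ T. Then ‖q_T‖ ≤ 3δ₁T + (Σ_{k=0}^{T} ‖g_k‖²)^{1/2}. -/
/-!
Orthogonality of `v (j + 1)` to `q j` means the new inexact gradient `g (j + 1)` meets the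
accumulated sum `q j` at an inner product of at most `δ₁ ‖q j‖`. Hence
`‖q (j + 1)‖² ≤ (‖q j‖ + δ₁)² + ‖g (j + 1)‖²`, and the bound `‖q j‖ ≤ δ₁ j + √(∑ₖ≤ⱼ ‖g k‖²)`
propagates by induction on `j`.
-/

open scoped RealInnerProductSpace

open Finset

lemma add_sqrt_sq_add_le {A s t : ℝ} (hA : 0 ≤ A) (hs : 0 ≤ s) (ht : 0 ≤ t) :
    (A + √s) ^ 2 + t ≤ (A + √(s + t)) ^ 2 := by
  have hmono : √s ≤ √(s + t) := Real.sqrt_le_sqrt (by linarith)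
  nlinarith [Real.sq_sqrt hs, Real.sq_sqrt (add_nonneg hs ht), mul_le_mul_of_nonneg_left hmono hA]

section InnerProductSpace

variable {H : Type*} [NormedAddCommGroup H] [InnerProductSpace ℝ H]

lemma real_inner_le_mul_norm_of_inner_eq_zero {x g v : H} {δ : ℝ} (horth : ⟪v, x⟫ = 0)
    (hgv : ‖g - v‖ ≤ δ) : ⟪x, g⟫ ≤ δ * ‖x‖ :=
  calc ⟪x, g⟫ = ⟪x, g - v⟫ := by rw [inner_sub_right, real_inner_comm v x, horth, sub_zero]
    _ ≤ ‖x‖ * ‖g - v‖ := real_inner_le_norm _ _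
    _ ≤ δ * ‖x‖ := by rw [mul_comm]; exact mul_le_mul_of_nonneg_right hgv (norm_nonneg x)

lemma norm_add_sq_le_of_inner_le {x y : H} {d : ℝ} (h : ⟪x, y⟫ ≤ d * ‖x‖) :
    ‖x + y‖ ^ 2 ≤ (‖x‖ + d) ^ 2 + ‖y‖ ^ 2 := by
  rw [norm_add_sq_real]
  nlinarith [sq_nonneg d]

theorem norm_partialSum_le_of_inner_le {g q : ℕ → H} {δ : ℝ} (hδ : 0 ≤ δ)
    (hq : ∀ j, q j = ∑ k ∈ range (j + 1), g k) {n : ℕ}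
    (hinner : ∀ j < n, ⟪q j, g (j + 1)⟫ ≤ δ * ‖q j‖) :
    ‖q n‖ ≤ δ * n + √(∑ k ∈ range (n + 1), ‖g k‖ ^ 2) := by
  induction n with
  | zero => simp [hq]
  | succ n ih =>
    have ih := ih fun j hj => hinner j (hj.trans n.lt_succ_self)
    have hS : 0 ≤ ∑ k ∈ range (n + 1), ‖g k‖ ^ 2 := sum_nonneg fun k _ => sq_nonneg _
    have hstep : ‖q (n + 1)‖ ^ 2 ≤ (‖q n‖ + δ) ^ 2 + ‖g (n + 1)‖ ^ 2 := by
      rw [hq (n + 1), sum_range_succ, ← hq n]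
      exact norm_add_sq_le_of_inner_le (hinner n n.lt_succ_self)
    have hsq : ‖q (n + 1)‖ ^ 2 ≤ (δ * (n + 1 : ℕ) + √(∑ k ∈ range (n + 1 + 1), ‖g k‖ ^ 2)) ^ 2 :=
      calc ‖q (n + 1)‖ ^ 2 ≤ (‖q n‖ + δ) ^ 2 + ‖g (n + 1)‖ ^ 2 := hstep
        _ ≤ (δ * (n + 1 : ℕ) + √(∑ k ∈ range (n + 1), ‖g k‖ ^ 2)) ^ 2 + ‖g (n + 1)‖ ^ 2 := by
          gcongr ?_ ^ 2 + _
          push_cast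
          linarith
        _ ≤ _ := by
          rw [sum_range_succ _ (n + 1)]
          exact add_sqrt_sq_add_le (by positivity) hS (sq_nonneg _)
    exact (pow_le_pow_iff_left₀ (norm_nonneg _) (by positivity) two_ne_zero).mp hsq

end InnerProductSpace

theorem cg_q_bound_general {H : Type*} [NormedAddCommGroup H] [InnerProductSpace ℝ H]
    (T : ℕ) (δ₁ : ℝ) (g v : ℕ → H)
    (hgv : ∀ k ≤ T, ‖g k - v k‖ ≤ δ₁)
    (q : ℕ → H) (hq : ∀ j, q j = ∑ k ∈ Finset.range (j + 1), g k)
    (horth : ∀ j, 1 ≤ j → j ≤ T → ⟪v j, q (j - 1)⟫ = 0) :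
    ‖q T‖ ≤ 3 * δ₁ * T + Real.sqrt (∑ k ∈ Finset.range (T + 1), ‖g k‖ ^ 2) := by
  have hδ₁ : 0 ≤ δ₁ := (norm_nonneg _).trans (hgv 0 T.zero_le)
  have hinner : ∀ j < T, ⟪q j, g (j + 1)⟫ ≤ δ₁ * ‖q j‖ := fun j hj =>
    real_inner_le_mul_norm_of_inner_eq_zero (horth (j + 1) j.succ_pos hj) (hgv (j + 1) hj)
  calc ‖q T‖ ≤ δ₁ * T + √(∑ k ∈ range (T + 1), ‖g k‖ ^ 2) :=
        norm_partialSum_le_of_inner_le hδ₁ hq hinner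
    _ ≤ 3 * δ₁ * T + √(∑ k ∈ range (T + 1), ‖g k‖ ^ 2) := by
        gcongr
        nlinarith [T.cast_nonneg (α := ℝ)]

/-- Bound on the accumulated inexact-gradient sum in Nemirovski's CG method. -/
theorem cg_q_bound {H : Type*} [NormedAddCommGroup H] [InnerProductSpace ℝ H]
    (T : ℕ) (δ₁ : ℝ) (hδ₁ : 0 ≤ δ₁) (g v : ℕ → H)
    (hgv : ∀ k ≤ T, ‖g k - v k‖ ≤ δ₁)
    (q : ℕ → H) (hq : ∀ j, q j = ∑ k ∈ Finset.range (j + 1), g k)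
    (horth : ∀ j, 1 ≤ j → j ≤ T → ⟪v j, q (j - 1)⟫ = 0) :
    ‖q T‖ ≤ 3 * δ₁ * T + Real.sqrt (∑ k ∈ Finset.range (T + 1), ‖g k‖ ^ 2) :=
  cg_q_bound_general T δ₁ g v hgv q hq horth
end

section
/- Let H be a real inner product space, δ₁ ≥ 0, and let g₀,…,g_T and v₀,…,v_T be vectors in H with ‖g_k − v_k‖ ≤ δ₁ for all k. Define q_j = Σ_{k=0}^{j} g_k for 0 ≤ j ≤ T, and suppose ⟨v_j, q_{j−1}⟩ = 0 for all 1 ≤ j ≤ T. Then ‖q_T‖² ≤ Σ_{k=0}^{T} ‖g_k‖² + 2δ₁ Σ_{k=0}^{T−1} ‖q_k‖. -/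
open scoped RealInnerProductSpace

open Finset

section InexactOrthogonality

variable {H : Type*} [NormedAddCommGroup H] [InnerProductSpace ℝ H]

theorem real_inner_le_of_norm_sub_le_of_inner_eq_zero {a b x : H} {δ : ℝ}
    (hab : ‖a - b‖ ≤ δ) (hbx : ⟪b, x⟫ = 0) : ⟪a, x⟫ ≤ δ * ‖x‖ :=
  calc ⟪a, x⟫ = ⟪a - b, x⟫ := by rw [inner_sub_left, hbx, sub_zero]
    _ ≤ ‖a - b‖ * ‖x‖ := real_inner_le_norm _ _
    _ ≤ δ * ‖x‖ := by gcongr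

theorem norm_add_sq_le_of_norm_sub_le_of_inner_eq_zero {a b x : H} {δ : ℝ}
    (hab : ‖a - b‖ ≤ δ) (hbx : ⟪b, x⟫ = 0) :
    ‖x + a‖ ^ 2 ≤ ‖x‖ ^ 2 + ‖a‖ ^ 2 + 2 * δ * ‖x‖ := by
  have hax := real_inner_le_of_norm_sub_le_of_inner_eq_zero hab hbx
  rw [norm_add_sq_real, real_inner_comm]
  linarith

theorem norm_sum_range_sq_le_of_inexact_orthogonal (T : ℕ) {δ : ℝ} (g v : ℕ → H)
    (hgv : ∀ k ≤ T, ‖g k - v k‖ ≤ δ)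
    (horth : ∀ j < T, ⟪v (j + 1), ∑ k ∈ range (j + 1), g k⟫ = 0) :
    ‖∑ k ∈ range (T + 1), g k‖ ^ 2 ≤
      ∑ k ∈ range (T + 1), ‖g k‖ ^ 2 + 2 * δ * ∑ j ∈ range T, ‖∑ k ∈ range (j + 1), g k‖ := by
  induction T with
  | zero => simp
  | succ T ih =>
    have hprev := ih (fun k hk => hgv k (by omega)) (fun j hj => horth j (by omega))
    have hstep := norm_add_sq_le_of_norm_sub_le_of_inner_eq_zero (hgv (T + 1) le_rfl)
      (horth T (Nat.lt_succ_self T))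
    rw [sum_range_succ g (T + 1), sum_range_succ (fun k => ‖g k‖ ^ 2) (T + 1),
      sum_range_succ (fun j => ‖∑ k ∈ range (j + 1), g k‖) T]
    linarith

end InexactOrthogonality

theorem cg_q_sq_upper_bound_general {H : Type*} [NormedAddCommGroup H] [InnerProductSpace ℝ H]
    (T : ℕ) (δ₁ : ℝ) (g v : ℕ → H)
    (hgv : ∀ k ≤ T, ‖g k - v k‖ ≤ δ₁)
    (q : ℕ → H) (hq : ∀ j, q j = ∑ k ∈ Finset.range (j + 1), g k)
    (horth : ∀ j, 1 ≤ j → j ≤ T → ⟪v j, q (j - 1)⟫ = 0) :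
    ‖q T‖ ^ 2 ≤ (∑ k ∈ Finset.range (T + 1), ‖g k‖ ^ 2)
      + 2 * δ₁ * ∑ k ∈ Finset.range T, ‖q k‖ := by
  obtain rfl : q = fun j => ∑ k ∈ range (j + 1), g k := funext hq
  exact norm_sum_range_sq_le_of_inexact_orthogonal T g v hgv
    fun j hj => by simpa using horth (j + 1) (Nat.succ_pos j) hj

/-- Upper recursive bound on the accumulated inexact-gradient sum in Nemirovski's CG method. -/
theorem cg_q_sq_upper_bound {H : Type*} [NormedAddCommGroup H] [InnerProductSpace ℝ H]
    (T : ℕ) (δ₁ : ℝ) (hδ₁ : 0 ≤ δ₁) (g v : ℕ → H)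
    (hgv : ∀ k ≤ T, ‖g k - v k‖ ≤ δ₁)
    (q : ℕ → H) (hq : ∀ j, q j = ∑ k ∈ Finset.range (j + 1), g k)
    (horth : ∀ j, 1 ≤ j → j ≤ T → ⟪v j, q (j - 1)⟫ = 0) :
    ‖q T‖ ^ 2 ≤ (∑ k ∈ Finset.range (T + 1), ‖g k‖ ^ 2)
      + 2 * δ₁ * ∑ k ∈ Finset.range T, ‖q k‖ :=
  cg_q_sq_upper_bound_general T δ₁ g v hgv q hq horth
end

section
/- Let f : ℝⁿ → ℝ be differentiable and L-smooth (‖∇f(x) − ∇f(y)‖ ≤ L‖x − y‖ for all x, y, with L > 0). Let x ∈ ℝⁿ and let g ∈ ℝⁿ satisfy ‖g − ∇f(x)‖ ≤ δ₁ for some δ₁ ≥ 0. Then ‖g‖² ≤ 4L·(f(x) − f(x − (1/(2L))·g)) + 2δ₁². -/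
/-!
The Lipschitz bound on the gradient gives the descent lemma
`f (x + v) ≤ f x + ⟪∇f x, v⟫ + L/2 ‖v‖²`. For the step `v = -g/(2L)`, multiplied by `4L`, it
yields `4L (f x - f (x - g/(2L))) ≥ 2⟪∇f x, g⟫ - ‖g‖²/2`, while `‖g - ∇f x‖ ≤ δ₁` gives
`⟪∇f x, g⟫ ≥ ‖g‖² - δ₁‖g‖`. What remains is `(‖g‖ - 2δ₁)² / 2 ≥ 0`.
-/

open InnerProductSpace Set

variable {E : Type*} [NormedAddCommGroup E] [InnerProductSpace ℝ E]

theorem norm_sq_sub_mul_le_inner_of_norm_sub_le {a g : E} {δ : ℝ} (h : ‖g - a‖ ≤ δ) :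
    ‖g‖ ^ 2 - δ * ‖g‖ ≤ inner ℝ a g :=
  calc ‖g‖ ^ 2 - δ * ‖g‖
      ≤ ‖g‖ ^ 2 - ‖g - a‖ * ‖g‖ := by gcongr
    _ ≤ ‖g‖ ^ 2 - inner ℝ (g - a) g := by gcongr; exact real_inner_le_norm _ _
    _ = inner ℝ a g := by rw [inner_sub_left, real_inner_self_eq_norm_sq]; ring

variable [CompleteSpace E]

theorem HasGradientAt.hasDerivAt_comp_add_smul {f : E → ℝ} {f' x v : E} {t : ℝ}
    (hf : HasGradientAt f f' (x + t • v)) :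
    HasDerivAt (fun s : ℝ => f (x + s • v)) (inner ℝ f' v) t := by
  have hline : HasDerivAt (fun s : ℝ => x + s • v) v t := by
    simpa using ((hasDerivAt_id t).smul_const v).const_add x
  exact (hasGradientAt_iff_hasFDerivAt.mp hf).comp_hasDerivAt t hline

theorem inner_gradient_sub_le_of_lipschitz {f : E → ℝ} {L : ℝ}
    (hsmooth : ∀ x y, ‖gradient f x - gradient f y‖ ≤ L * ‖x - y‖)
    (x v : E) {t : ℝ} (ht : 0 ≤ t) :
    inner ℝ (gradient f (x + t • v) - gradient f x) v ≤ L * t * ‖v‖ ^ 2 :=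
  calc inner ℝ (gradient f (x + t • v) - gradient f x) v
      ≤ ‖gradient f (x + t • v) - gradient f x‖ * ‖v‖ := real_inner_le_norm _ _
    _ ≤ L * ‖x + t • v - x‖ * ‖v‖ := by gcongr; exact hsmooth _ _
    _ = L * t * ‖v‖ ^ 2 := by
      rw [add_sub_cancel_left, norm_smul, Real.norm_of_nonneg ht]; ring

theorem le_add_inner_gradient_add_of_lipschitz_gradient {f : E → ℝ} {L : ℝ}
    (hf : Differentiable ℝ f)
    (hsmooth : ∀ x y, ‖gradient f x - gradient f y‖ ≤ L * ‖x - y‖) (x v : E) :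
    f (x + v) ≤ f x + inner ℝ (gradient f x) v + L / 2 * ‖v‖ ^ 2 := by
  set ψ : ℝ → ℝ := fun t =>
    f (x + t • v) - t * inner ℝ (gradient f x) v - L / 2 * t ^ 2 * ‖v‖ ^ 2
  have hψ : ∀ t, HasDerivAt ψ
      (inner ℝ (gradient f (x + t • v) - gradient f x) v - L * t * ‖v‖ ^ 2) t := by
    intro t
    have hline := (hf (x + t • v)).hasGradientAt.hasDerivAt_comp_add_smul
    have hquad := ((hasDerivAt_pow 2 t).const_mul (L / 2)).mul_const (‖v‖ ^ 2)
    have hlin := (hasDerivAt_id t).mul_const (inner ℝ (gradient f x) v)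
    exact ((hline.sub hlin).sub hquad).congr_deriv (by rw [inner_sub_left]; push_cast; ring)
  have hanti : AntitoneOn ψ (Ici 0) := by
    refine antitoneOn_of_hasDerivWithinAt_nonpos (convex_Ici 0)
      (fun t _ => (hψ t).continuousAt.continuousWithinAt)
      (fun t _ => (hψ t).hasDerivWithinAt) fun t ht => ?_
    rw [interior_Ici] at ht
    exact sub_nonpos.mpr (inner_gradient_sub_le_of_lipschitz hsmooth x v ht.le)
  have h01 : ψ 1 ≤ ψ 0 := hanti (mem_Ici.mpr le_rfl) (mem_Ici.mpr zero_le_one) zero_le_one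
  simp only [ψ, one_smul, zero_smul, add_zero, one_pow, zero_mul, one_mul, sub_zero,
    ne_eq, OfNat.ofNat_ne_zero, not_false_eq_true, zero_pow, mul_zero] at h01
  linarith

theorem inexact_gradient_descent_step_general (n : ℕ) (f : EuclideanSpace ℝ (Fin n) → ℝ)
    (L δ₁ : ℝ) (hL : 0 < L)
    (hf : Differentiable ℝ f)
    (hsmooth : ∀ x y, ‖gradient f x - gradient f y‖ ≤ L * ‖x - y‖)
    (x g : EuclideanSpace ℝ (Fin n))
    (hg : ‖g - gradient f x‖ ≤ δ₁) :
    ‖g‖ ^ 2 ≤ 4 * L * (f x - f (x - (1 / (2 * L)) • g)) + 2 * δ₁ ^ 2 := by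
  have hdescent := le_add_inner_gradient_add_of_lipschitz_gradient hf hsmooth x
    (-((1 / (2 * L)) • g))
  rw [← sub_eq_add_neg, inner_neg_right, real_inner_smul_right, norm_neg, norm_smul,
    Real.norm_of_nonneg (by positivity)] at hdescent
  have hstep : 2 * inner ℝ (gradient f x) g - ‖g‖ ^ 2 / 2
      ≤ 4 * L * (f x - f (x - (1 / (2 * L)) • g)) := by
    have := mul_le_mul_of_nonneg_left hdescent (by positivity : (0 : ℝ) ≤ 4 * L)
    field_simp at this ⊢
    linarith
  have hinner := norm_sq_sub_mul_le_inner_of_norm_sub_le hg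
  nlinarith [sq_nonneg (‖g‖ - 2 * δ₁)]

/-- Inexact-gradient descent inequality for the step of size `1/(2L)`. -/
theorem inexact_gradient_descent_step (n : ℕ) (f : EuclideanSpace ℝ (Fin n) → ℝ)
    (L δ₁ : ℝ) (hL : 0 < L) (hδ₁ : 0 ≤ δ₁)
    (hf : Differentiable ℝ f)
    (hsmooth : ∀ x y, ‖gradient f x - gradient f y‖ ≤ L * ‖x - y‖)
    (x g : EuclideanSpace ℝ (Fin n))
    (hg : ‖g - gradient f x‖ ≤ δ₁) :
    ‖g‖ ^ 2 ≤ 4 * L * (f x - f (x - (1 / (2 * L)) • g)) + 2 * δ₁ ^ 2 :=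
  inexact_gradient_descent_step_general n f L δ₁ hL hf hsmooth x g hg
end

section
/- Let f : ℝⁿ → ℝ be differentiable and γ-quasar-convex with respect to a minimizer x* for γ ∈ (0,1], i.e. f(x*) ≥ f(x) + (1/γ)⟨∇f(x), x* − x⟩ for all x. Let x₀, x̂ ∈ ℝⁿ satisfy the orthogonality relation ⟨∇f(x̂), x̂ − x₀⟩ = 0, and let g ∈ ℝⁿ satisfy ‖g − ∇f(x̂)‖ ≤ δ₁ for some δ₁ ≥ 0. Then f(x̂) − f(x*) ≤ (1/γ)⟨g, x₀ − x*⟩ + (δ₁/γ)‖x₀ − x*‖. -/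
open scoped RealInnerProductSpace

/-! Quasar-convexity at `x̂` bounds the gap `f x̂ - f x*` by `(1/γ)⟪∇f x̂, x̂ - x*⟫`. Orthogonality
lets `x̂` be replaced by `x₀` in that pairing, and Cauchy–Schwarz trades `∇f x̂` for the inexact
gradient `g` at the cost of `δ₁ ‖x₀ - x*‖`. -/

section InnerProduct

variable {E : Type*} [NormedAddCommGroup E] [InnerProductSpace ℝ E]

theorem real_inner_le_inner_add_of_norm_sub_le {G g v : E} {δ : ℝ} (hg : ‖g - G‖ ≤ δ) :
    ⟪G, v⟫ ≤ ⟪g, v⟫ + δ * ‖v‖ := by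
  have hcs : ⟪G - g, v⟫ ≤ δ * ‖v‖ :=
    (real_inner_le_norm _ _).trans
      (mul_le_mul_of_nonneg_right (norm_sub_rev G g ▸ hg) (norm_nonneg v))
  rw [inner_sub_left] at hcs
  linarith

theorem real_inner_sub_eq_of_inner_sub_eq_zero {G x x₀ y : E} (horth : ⟪G, x - x₀⟫ = 0) :
    ⟪G, x - y⟫ = ⟪G, x₀ - y⟫ := by
  rw [← sub_add_sub_cancel x x₀ y, inner_add_right, horth, zero_add]

theorem sub_le_inner_gradient_of_quasar [CompleteSpace E] {f : E → ℝ} {γ : ℝ} {xstar : E}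
    (hquasar : ∀ x, f x + (1 / γ) * ⟪gradient f x, xstar - x⟫ ≤ f xstar) (x : E) :
    f x - f xstar ≤ (1 / γ) * ⟪gradient f x, x - xstar⟫ := by
  have h := hquasar x
  rw [← neg_sub x xstar, inner_neg_right] at h
  linarith

end InnerProduct

theorem quasar_convex_orthogonality_bound_general (n : ℕ) (f : EuclideanSpace ℝ (Fin n) → ℝ)
    (γ δ₁ : ℝ) (hγ0 : 0 < γ)
    (xstar : EuclideanSpace ℝ (Fin n))
    (hquasar : ∀ x, f x + (1 / γ) * ⟪gradient f x, xstar - x⟫ ≤ f xstar)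
    (x₀ xhat g : EuclideanSpace ℝ (Fin n))
    (horth : ⟪gradient f xhat, xhat - x₀⟫ = 0)
    (hg : ‖g - gradient f xhat‖ ≤ δ₁) :
    f xhat - f xstar ≤ (1 / γ) * ⟪g, x₀ - xstar⟫ + (δ₁ / γ) * ‖x₀ - xstar‖ := by
  calc f xhat - f xstar ≤ (1 / γ) * ⟪gradient f xhat, xhat - xstar⟫ :=
        sub_le_inner_gradient_of_quasar hquasar xhat
    _ = (1 / γ) * ⟪gradient f xhat, x₀ - xstar⟫ := by
        rw [real_inner_sub_eq_of_inner_sub_eq_zero horth]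
    _ ≤ (1 / γ) * (⟪g, x₀ - xstar⟫ + δ₁ * ‖x₀ - xstar‖) := by
        gcongr
        exact real_inner_le_inner_add_of_norm_sub_le hg
    _ = (1 / γ) * ⟪g, x₀ - xstar⟫ + (δ₁ / γ) * ‖x₀ - xstar‖ := by ring

/-- Per-iteration quasar-convexity bound with orthogonality and inexact gradient
in Nemirovski's CG method. -/
theorem quasar_convex_orthogonality_bound (n : ℕ) (f : EuclideanSpace ℝ (Fin n) → ℝ)
    (γ δ₁ : ℝ) (hγ0 : 0 < γ) (hγ1 : γ ≤ 1) (hδ₁ : 0 ≤ δ₁)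
    (hf : Differentiable ℝ f)
    (xstar : EuclideanSpace ℝ (Fin n)) (hmin : ∀ x, f xstar ≤ f x)
    (hquasar : ∀ x, f x + (1 / γ) * ⟪gradient f x, xstar - x⟫ ≤ f xstar)
    (x₀ xhat g : EuclideanSpace ℝ (Fin n))
    (horth : ⟪gradient f xhat, xhat - x₀⟫ = 0)
    (hg : ‖g - gradient f xhat‖ ≤ δ₁) :
    f xhat - f xstar ≤ (1 / γ) * ⟪g, x₀ - xstar⟫ + (δ₁ / γ) * ‖x₀ - xstar‖ :=
  quasar_convex_orthogonality_bound_general n f γ δ₁ hγ0 xstar hquasar x₀ xhat g horth hg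
end

section
/- Let f : ℝⁿ → ℝ be differentiable and L-smooth, let g : ℝⁿ → ℝⁿ satisfy ‖g(x) − ∇f(x)‖ ≤ δ₁ for all x (δ₁ ≥ 0), let f* = inf f > −∞, and let x̂₀, x̂₁, …, x̂_T be points satisfying f(x̂_{k+1}) ≤ f(x̂_k − (1/(2L))·g(x̂_k)) for all 0 ≤ k < T. Then Σ_{k=0}^{T−1} ‖g(x̂_k)‖² ≤ 4L·(f(x̂₀) − f*) + 2T·δ₁². -/
/-!
The descent lemma at `x̂ₖ` with step `-(1/(2L)) g(x̂ₖ)`, together with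
`⟪∇f(x̂ₖ), g(x̂ₖ)⟫ ≥ ‖g(x̂ₖ)‖² - δ₁‖g(x̂ₖ)‖`, gives after completing the square
`‖g(x̂ₖ)‖² ≤ 4L (f(x̂ₖ) - f(x̂ₖ₊₁)) + 2δ₁²`. Summing over `k < T` telescopes, and `f(x̂_T) ≥ f*`.
-/

open Finset
open scoped RealInnerProductSpace

section Descent

variable {E : Type*} [NormedAddCommGroup E] [InnerProductSpace ℝ E] [CompleteSpace E]
  {f : E → ℝ} {L : ℝ}

theorem image_add_le_add_inner_gradient_add_sq (hf : Differentiable ℝ f)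
    (hs : ∀ x y, ‖gradient f x - gradient f y‖ ≤ L * ‖x - y‖) (x v : E) :
    f (x + v) ≤ f x + ⟪gradient f x, v⟫ + L / 2 * ‖v‖ ^ 2 := by
  set φ : ℝ → ℝ := fun t ↦ f (x + t • v) - t * ⟪gradient f x, v⟫ - L / 2 * ‖v‖ ^ 2 * t ^ 2
  have hφ' (t : ℝ) : HasDerivAt φ
      (⟪gradient f (x + t • v) - gradient f x, v⟫ - L * t * ‖v‖ ^ 2) t := by
    have hline : HasDerivAt (fun t : ℝ ↦ x + t • v) v t := by
      simpa using ((hasDerivAt_id t).smul_const v).const_add x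
    refine ((((hf _).hasGradientAt.hasFDerivAt.comp_hasDerivAt t hline).sub
      ((hasDerivAt_id t).mul_const ⟪gradient f x, v⟫)).sub
      ((hasDerivAt_pow 2 t).const_mul (L / 2 * ‖v‖ ^ 2))).congr_deriv ?_
    rw [InnerProductSpace.toDual_apply_apply, inner_sub_left]
    push_cast
    ring
  have hφ'_nonpos (t : ℝ) (ht : 0 ≤ t) :
      ⟪gradient f (x + t • v) - gradient f x, v⟫ - L * t * ‖v‖ ^ 2 ≤ 0 := by
    have := calc ⟪gradient f (x + t • v) - gradient f x, v⟫
        ≤ ‖gradient f (x + t • v) - gradient f x‖ * ‖v‖ := real_inner_le_norm _ _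
      _ ≤ L * ‖(x + t • v) - x‖ * ‖v‖ := by gcongr; exact hs _ _
      _ = L * t * ‖v‖ ^ 2 := by
        rw [add_sub_cancel_left, norm_smul, Real.norm_of_nonneg ht]; ring
    linarith
  have hanti : AntitoneOn φ (Set.Icc 0 1) :=
    antitoneOn_of_hasDerivWithinAt_nonpos (convex_Icc 0 1)
      (fun t _ ↦ (hφ' t).continuousAt.continuousWithinAt)
      (fun t _ ↦ (hφ' t).hasDerivWithinAt)
      (fun t ht ↦ hφ'_nonpos t (by rw [interior_Icc] at ht; exact ht.1.le))
  have := hanti (by simp) (by simp) zero_le_one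
  simp only [φ, zero_smul, one_smul, add_zero, zero_mul, one_mul, sub_zero, one_pow, mul_one,
    ne_eq, OfNat.ofNat_ne_zero, not_false_eq_true, zero_pow, mul_zero] at this
  linarith

theorem sq_norm_le_of_inexact_gradient_step (hL : 0 < L) (hf : Differentiable ℝ f)
    (hs : ∀ x y, ‖gradient f x - gradient f y‖ ≤ L * ‖x - y‖) {x y g : E} {δ : ℝ}
    (hg : ‖g - gradient f x‖ ≤ δ) (hy : f y ≤ f (x - (1 / (2 * L)) • g)) :
    ‖g‖ ^ 2 ≤ 4 * L * (f x - f y) + 2 * δ ^ 2 := by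
  have hdesc := image_add_le_add_inner_gradient_add_sq hf hs x (-((1 / (2 * L)) • g))
  rw [← sub_eq_add_neg, inner_neg_right, real_inner_smul_right, norm_neg, norm_smul,
    Real.norm_of_nonneg (by positivity)] at hdesc
  have hinner : ‖g‖ ^ 2 - δ * ‖g‖ ≤ ⟪gradient f x, g⟫ := by
    have hcs : ⟪g - gradient f x, g⟫ ≤ δ * ‖g‖ :=
      (real_inner_le_norm _ _).trans (by gcongr)
    rw [inner_sub_left, real_inner_self_eq_norm_sq] at hcs
    linarith
  have hdecrease : 2 * ⟪gradient f x, g⟫ - ‖g‖ ^ 2 / 2 ≤ 4 * L * (f x - f y) :=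
    calc 2 * ⟪gradient f x, g⟫ - ‖g‖ ^ 2 / 2
        = 4 * L * (1 / (2 * L) * ⟪gradient f x, g⟫ - L / 2 * (1 / (2 * L) * ‖g‖) ^ 2) := by
          field_simp; ring
      _ ≤ 4 * L * (f x - f y) := mul_le_mul_of_nonneg_left (by linarith) (by positivity)
  nlinarith [sq_nonneg (‖g‖ - 2 * δ)]

end Descent

theorem sum_range_le_of_le_mul_sub_succ_add {a F : ℕ → ℝ} {c d : ℝ} {T : ℕ}
    (h : ∀ k < T, a k ≤ c * (F k - F (k + 1)) + d) :
    ∑ k ∈ range T, a k ≤ c * (F 0 - F T) + T * d :=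
  calc ∑ k ∈ range T, a k ≤ ∑ k ∈ range T, (c * (F k - F (k + 1)) + d) :=
        sum_le_sum fun k hk ↦ h k (mem_range.1 hk)
    _ = c * (F 0 - F T) + T * d := by
        rw [sum_add_distrib, ← mul_sum, sum_range_sub', sum_const, card_range, nsmul_eq_mul]

theorem telescoped_inexact_descent_general (n : ℕ) (f : EuclideanSpace ℝ (Fin n) → ℝ)
    (L δ₁ fstar : ℝ) (hL : 0 < L)
    (hf : Differentiable ℝ f)
    (hsmooth : ∀ x y, ‖gradient f x - gradient f y‖ ≤ L * ‖x - y‖)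
    (g : EuclideanSpace ℝ (Fin n) → EuclideanSpace ℝ (Fin n))
    (hg : ∀ x, ‖g x - gradient f x‖ ≤ δ₁)
    (hfstar : IsGLB (Set.range f) fstar)
    (T : ℕ) (xhat : ℕ → EuclideanSpace ℝ (Fin n))
    (hdesc : ∀ k < T, f (xhat (k + 1)) ≤ f (xhat k - (1 / (2 * L)) • g (xhat k))) :
    ∑ k ∈ Finset.range T, ‖g (xhat k)‖ ^ 2
      ≤ 4 * L * (f (xhat 0) - fstar) + 2 * (T : ℝ) * δ₁ ^ 2 := by
  have htel := sum_range_le_of_le_mul_sub_succ_add fun k hk ↦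
    sq_norm_le_of_inexact_gradient_step hL hf hsmooth (hg (xhat k)) (hdesc k hk)
  have hfstar_le : fstar ≤ f (xhat T) := hfstar.1 (Set.mem_range_self _)
  calc ∑ k ∈ Finset.range T, ‖g (xhat k)‖ ^ 2
      ≤ 4 * L * (f (xhat 0) - f (xhat T)) + T * (2 * δ₁ ^ 2) := htel
    _ ≤ 4 * L * (f (xhat 0) - fstar) + 2 * (T : ℝ) * δ₁ ^ 2 := by
      have := mul_le_mul_of_nonneg_left hfstar_le (by positivity : 0 ≤ 4 * L)
      linarith

/-- Telescoped inexact-gradient descent inequality along iterates dominated by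
gradient-step points. -/
theorem telescoped_inexact_descent (n : ℕ) (f : EuclideanSpace ℝ (Fin n) → ℝ)
    (L δ₁ fstar : ℝ) (hL : 0 < L) (hδ₁ : 0 ≤ δ₁)
    (hf : Differentiable ℝ f)
    (hsmooth : ∀ x y, ‖gradient f x - gradient f y‖ ≤ L * ‖x - y‖)
    (g : EuclideanSpace ℝ (Fin n) → EuclideanSpace ℝ (Fin n))
    (hg : ∀ x, ‖g x - gradient f x‖ ≤ δ₁)
    (hfstar : IsGLB (Set.range f) fstar)
    (T : ℕ) (xhat : ℕ → EuclideanSpace ℝ (Fin n))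
    (hdesc : ∀ k < T, f (xhat (k + 1)) ≤ f (xhat k - (1 / (2 * L)) • g (xhat k))) :
    ∑ k ∈ Finset.range T, ‖g (xhat k)‖ ^ 2
      ≤ 4 * L * (f (xhat 0) - fstar) + 2 * (T : ℝ) * δ₁ ^ 2 :=
  telescoped_inexact_descent_general n f L δ₁ fstar hL hf hsmooth g hg hfstar T xhat hdesc
end

section
/- Let T ≥ 0, δ₁ ≥ 0, ε₀ > 0, R ≥ 0, L > 0, μ > 0 be real numbers, let β ∈ (0,1), γ ∈ (0,1], and let c ≥ (1/γ)(R + 3√(2ε₀/μ)). If T·γ·β·ε₀ + δ₁·T·(cγ − R) ≤ (3δ₁T + 2√(L(1−β)ε₀))·√(2ε₀/μ), then T ≤ (2/(γβ))·√(2(1−β)L/μ). -/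
open Real

lemma sqrt_mul_mul_sqrt_mul {x y ε : ℝ} (hε : 0 ≤ ε) (hy : 0 ≤ y) :
    √(x * ε) * √(ε * y) = ε * √(x * y) := by
  rw [← sqrt_mul' _ (mul_nonneg hε hy), show x * ε * (ε * y) = ε ^ 2 * (x * y) by ring,
    sqrt_mul (sq_nonneg ε), sqrt_sq hε]

theorem cg_iteration_count_bound_general (T δ₁ ε₀ R L μ β γ c : ℝ)
    (hT : 0 ≤ T) (hδ₁ : 0 ≤ δ₁) (hε₀ : 0 < ε₀) (hμ : 0 < μ)
    (hβ0 : 0 < β) (hγ0 : 0 < γ)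
    (hc : (1 / γ) * (R + 3 * Real.sqrt (2 * ε₀ / μ)) ≤ c)
    (h : T * γ * β * ε₀ + δ₁ * T * (c * γ - R)
        ≤ (3 * δ₁ * T + 2 * Real.sqrt (L * (1 - β) * ε₀)) * Real.sqrt (2 * ε₀ / μ)) :
    T ≤ (2 / (γ * β)) * Real.sqrt (2 * (1 - β) * L / μ) := by
  set s := √(2 * ε₀ / μ) with hs
  have hcγ : R + 3 * s ≤ c * γ := by rwa [one_div_mul_eq_div, div_le_iff₀ hγ0] at hc
  -- the lower bound on `c` lets the `δ₁`-term on the left absorb the one on the right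
  have hδ₁_absorbed : 3 * δ₁ * T * s ≤ δ₁ * T * (c * γ - R) := by
    have := mul_le_mul_of_nonneg_left (show 3 * s ≤ c * γ - R by linarith) (mul_nonneg hδ₁ hT)
    linarith
  have hsqrt : √(L * (1 - β) * ε₀) * s = ε₀ * √(2 * (1 - β) * L / μ) := by
    rw [hs, show 2 * ε₀ / μ = ε₀ * (2 / μ) by ring,
      show 2 * (1 - β) * L / μ = L * (1 - β) * (2 / μ) by ring]
    exact sqrt_mul_mul_sqrt_mul hε₀.le (by positivity)
  have hgap : (T * (γ * β)) * ε₀ ≤ (2 * √(2 * (1 - β) * L / μ)) * ε₀ := by linarith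
  rw [div_mul_eq_mul_div, le_div_iff₀ (by positivity)]
  exact le_of_mul_le_mul_right hgap hε₀

/-- Resolution of the bound on the number of iterations of Nemirovski's CG method. -/
theorem cg_iteration_count_bound (T δ₁ ε₀ R L μ β γ c : ℝ)
    (hT : 0 ≤ T) (hδ₁ : 0 ≤ δ₁) (hε₀ : 0 < ε₀) (hR : 0 ≤ R) (hL : 0 < L) (hμ : 0 < μ)
    (hβ0 : 0 < β) (hβ1 : β < 1) (hγ0 : 0 < γ) (hγ1 : γ ≤ 1)
    (hc : (1 / γ) * (R + 3 * Real.sqrt (2 * ε₀ / μ)) ≤ c)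
    (h : T * γ * β * ε₀ + δ₁ * T * (c * γ - R)
        ≤ (3 * δ₁ * T + 2 * Real.sqrt (L * (1 - β) * ε₀)) * Real.sqrt (2 * ε₀ / μ)) :
    T ≤ (2 / (γ * β)) * Real.sqrt (2 * (1 - β) * L / μ) :=
  cg_iteration_count_bound_general T δ₁ ε₀ R L μ β γ c hT hδ₁ hε₀ hμ hβ0 hγ0 hc h
end

section
/- Let f : ℝⁿ → ℝ be differentiable, L-smooth and γ-quasar-convex with respect to a minimizer x* (γ ∈ (0,1]), satisfying the quadratic growth condition f(x) − f* ≥ (μ/2)‖x − x*‖² with μ > 0, and f(x₀) − f* ≤ 1. Let g : ℝⁿ → ℝⁿ satisfy ‖g(x) − ∇f(x)‖ ≤ δ₁ for all x, where δ₁² ≤ γ²α²με/32 for some α ∈ (0,1) and some 0 < ε ≤ f(x₀) − f*. Suppose the Nemirovski Conjugate Gradient method is restarted: each restart runs T = ⌈(8/γ)·√(L/μ)·√(1+α)/(1−α)⌉ iterations starting from the output of the previous restart, with ‖g(x̂_k)‖ ≥ 2δ₁ at every iteration of every restart. Then after K = ⌈(2/(1−α))·log(1/ε)⌉ restarts the output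 point x̂ satisfies f(x̂) − f* ≤ ε. -/
/-!
Write `Δ₀ = f (x 0) - f*` and `Δ_T = f (x T) - f*` for the gaps of one run. In the run,
`xhat k` minimises `f` over an affine subspace through `x 0` containing the directions
`xhat k - x 0` and `q k`, so the exact gradient at `xhat k` is orthogonal to both. The gradient
step decreases `f` by `‖g‖² / (8L)` (this is where `‖g‖ ≥ 2δ₁` enters), so
`∑ ‖g (xhat i)‖² ≤ 8L Δ₀`, and orthogonality makes `q T = ∑ g (xhat i)` almost a sum of
orthogonal vectors: `‖q T‖ ≤ √(8L Δ₀) + T δ₁`. Quasar-convexity at `xhat k`, again with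
orthogonality, gives `γ (f (xhat k) - f*) ≤ ⟪g (xhat k), x 0 - x*⟫ + δ₁ ‖x 0 - x*‖`; summing
over `k < T` and bounding `‖x 0 - x*‖² ≤ 2Δ₀/μ` by quadratic growth yields the contraction
`Δ_T ≤ (1-α)/2 Δ₀ + α/2 √(ε Δ₀)`. Across restarts this halves the gap until it is below `ε`,
which takes at most `K` restarts since `log 2 > 1/2`.
-/

open scoped RealInnerProductSpace

open Finset

theorem sq_add_sq_le_sqrt_add_sq {a b c : ℝ} (ha : 0 ≤ a) (hc : 0 ≤ c) :
    (√a + c) ^ 2 + b ^ 2 ≤ (√(a + b ^ 2) + c) ^ 2 := by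
  have hmono : √a ≤ √(a + b ^ 2) := Real.sqrt_le_sqrt (by nlinarith)
  nlinarith [Real.sq_sqrt ha, Real.sq_sqrt (show 0 ≤ a + b ^ 2 by positivity)]

theorem le_max_half_pow_of_contraction {a : ℕ → ℝ} {α ε : ℝ} (hα0 : 0 ≤ α) (hα1 : α ≤ 1)
    (hε : 0 ≤ ε) (ha : ∀ j, 0 ≤ a j)
    (hstep : ∀ j, a (j + 1) ≤ (1 - α) / 2 * a j + α / 2 * √(ε * a j)) (j : ℕ) :
    a j ≤ max ε ((1 / 2) ^ j * a 0) := by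
  induction j with
  | zero => simp
  | succ j ih =>
    rcases le_total (a j) ε with hsmall | hlarge
    · have : √(ε * a j) ≤ ε := Real.sqrt_le_left hε |>.2 (by nlinarith [ha j])
      refine le_max_of_le_left ?_
      nlinarith [hstep j]
    · have : √(ε * a j) ≤ a j := Real.sqrt_le_left (ha j) |>.2 (by nlinarith [ha j])
      have hhalf : a (j + 1) ≤ a j / 2 := by nlinarith [hstep j]
      rcases le_max_iff.1 ih with h | h
      · exact le_max_of_le_left (by linarith)
      · exact le_max_of_le_right (by rw [pow_succ]; linarith)

theorem half_pow_ceil_le {α ε : ℝ} (hα0 : 0 ≤ α) (hα1 : α < 1) (hε : 0 < ε) :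
    (1 / 2 : ℝ) ^ ⌈(2 / (1 - α)) * Real.log (1 / ε)⌉₊ ≤ ε := by
  set K := ⌈(2 / (1 - α)) * Real.log (1 / ε)⌉₊
  have hK : 2 * Real.log (1 / ε) ≤ K := by
    rcases le_total 0 (Real.log (1 / ε)) with hlog | hlog
    · refine le_trans ?_ (Nat.le_ceil _)
      gcongr
      rw [le_div_iff₀ (by linarith)]
      linarith
    · exact (by linarith : 2 * Real.log (1 / ε) ≤ 0).trans K.cast_nonneg
  have hlog : Real.log (1 / ε) ≤ K * Real.log 2 := by
    nlinarith [Real.log_two_gt_d9, (K.cast_nonneg : (0 : ℝ) ≤ K)]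
  rw [← Real.log_le_log_iff (by positivity) hε, Real.log_pow, one_div, Real.log_inv]
  rw [one_div, Real.log_inv] at hlog
  linarith

theorem eight_sqrt_le_of_eq_ceil {L μ γ α : ℝ} {T : ℕ} (hγ : 0 < γ) (hα0 : 0 ≤ α)
    (hα1 : α < 1) (hT : T = ⌈(8 / γ) * √(L / μ) * √(1 + α) / (1 - α)⌉₊) :
    8 * √(L / μ) ≤ (1 - α) * γ * T := by
  have hceil := Nat.le_ceil ((8 / γ) * √(L / μ) * √(1 + α) / (1 - α))
  rw [← hT, div_le_iff₀ (by linarith)] at hceil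
  have hsqrt : 1 ≤ √(1 + α) := Real.one_le_sqrt.2 (by linarith)
  calc 8 * √(L / μ) = γ * (8 / γ * √(L / μ)) := by field_simp
    _ ≤ γ * (8 / γ * √(L / μ) * √(1 + α)) :=
          mul_le_mul_of_nonneg_left (le_mul_of_one_le_right (by positivity) hsqrt) hγ.le
    _ ≤ γ * (T * (1 - α)) := by gcongr
    _ = (1 - α) * γ * T := by ring

variable {F : Type*} [NormedAddCommGroup F] [InnerProductSpace ℝ F]

theorem norm_le_sqrt_sum_sq_add_of_inner_le {q v : ℕ → F} {δ : ℝ} (hδ : 0 ≤ δ)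
    (hq0 : q 0 = 0) (hqs : ∀ k, q (k + 1) = q k + v k)
    (hinner : ∀ k, ⟪q k, v k⟫ ≤ δ * ‖q k‖) (m : ℕ) :
    ‖q m‖ ≤ √(∑ i ∈ range m, ‖v i‖ ^ 2) + m * δ := by
  induction m with
  | zero => simp [hq0]
  | succ m ih =>
    have hsq : ‖q (m + 1)‖ ^ 2 ≤ (‖q m‖ + δ) ^ 2 + ‖v m‖ ^ 2 := by
      rw [hqs, norm_add_sq_real]
      nlinarith [hinner m]
    have hih : (‖q m‖ + δ) ^ 2 ≤ (√(∑ i ∈ range m, ‖v i‖ ^ 2) + (m + 1) * δ) ^ 2 :=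
      pow_le_pow_left₀ (by positivity) (by linarith) 2
    have hstep := sq_add_sq_le_sqrt_add_sq (b := ‖v m‖)
      (sum_nonneg (s := range m) fun i _ => sq_nonneg ‖v i‖)
      (by positivity : 0 ≤ ((m : ℝ) + 1) * δ)
    rw [sum_range_succ, Nat.cast_succ]
    exact (pow_le_pow_iff_left₀ (norm_nonneg _) (by positivity) two_ne_zero).1 (by linarith)

variable [CompleteSpace F]

theorem hasDerivAt_apply_add_smul {f : F → ℝ} {p v : F} {t : ℝ}
    (hf : DifferentiableAt ℝ f (p + t • v)) :
    HasDerivAt (fun s : ℝ => f (p + s • v)) ⟪gradient f (p + t • v), v⟫ t := by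
  have hline : HasDerivAt (fun s : ℝ => p + s • v) v t := by
    simpa using ((hasDerivAt_id t).smul_const v).const_add p
  simpa [InnerProductSpace.toDual_apply_apply, Function.comp_def] using
    hf.hasGradientAt.hasFDerivAt.comp_hasDerivAt t hline

theorem inner_gradient_eq_zero_of_le_add_smul {f : F → ℝ} {p d : F}
    (hf : DifferentiableAt ℝ f p) (hmin : ∀ t : ℝ, f p ≤ f (p + t • d)) :
    ⟪gradient f p, d⟫ = 0 := by
  have hloc : IsLocalMin (fun t : ℝ => f (p + t • d)) 0 :=
    Filter.Eventually.of_forall fun t => by simpa using hmin t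
  simpa using hloc.hasDerivAt_eq_zero (hasDerivAt_apply_add_smul (t := 0) (by simpa using hf))

theorem le_add_inner_gradient_add_sq {f : F → ℝ} {L : ℝ} (hf : Differentiable ℝ f)
    (hsmooth : ∀ x y, ‖gradient f x - gradient f y‖ ≤ L * ‖x - y‖) (u v : F) :
    f (u + v) ≤ f u + ⟪gradient f u, v⟫ + L / 2 * ‖v‖ ^ 2 := by
  set φ : ℝ → ℝ := fun t => f (u + t • v) - t * ⟪gradient f u, v⟫ - L / 2 * t ^ 2 * ‖v‖ ^ 2
  have hφ : ∀ t, HasDerivAt φ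
      (⟪gradient f (u + t • v) - gradient f u, v⟫ - L * t * ‖v‖ ^ 2) t := by
    intro t
    have := (((hasDerivAt_apply_add_smul (p := u) (v := v) (hf _)).sub
      ((hasDerivAt_id t).mul_const ⟪gradient f u, v⟫)).sub
      ((((hasDerivAt_id t).pow 2).const_mul (L / 2)).mul_const (‖v‖ ^ 2)))
    exact this.congr_deriv (by simp only [inner_sub_left, id]; ring)
  have hφ' : ∀ t ∈ interior (Set.Ici (0 : ℝ)),
      ⟪gradient f (u + t • v) - gradient f u, v⟫ - L * t * ‖v‖ ^ 2 ≤ 0 := by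
    intro t ht
    rw [interior_Ici, Set.mem_Ioi] at ht
    have := calc ⟪gradient f (u + t • v) - gradient f u, v⟫
        ≤ ‖gradient f (u + t • v) - gradient f u‖ * ‖v‖ := real_inner_le_norm _ _
      _ ≤ L * ‖t • v‖ * ‖v‖ := by
          gcongr
          simpa using hsmooth (u + t • v) u
      _ = L * t * ‖v‖ ^ 2 := by rw [norm_smul, Real.norm_of_nonneg ht.le]; ring
    linarith
  have hanti := antitoneOn_of_hasDerivWithinAt_nonpos (convex_Ici 0)
    (HasDerivAt.continuousOn fun t _ => hφ t) (fun t _ => (hφ t).hasDerivWithinAt) hφ'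
  have h01 : φ 1 ≤ φ 0 := hanti Set.self_mem_Ici (by norm_num) zero_le_one
  have hφ0 : φ 0 = f u := by simp [φ]
  have hφ1 : φ 1 = f (u + v) - ⟪gradient f u, v⟫ - L / 2 * ‖v‖ ^ 2 := by
    simp only [φ, one_smul, one_mul, one_pow, mul_one]
  linarith

theorem le_sub_of_inexact_gradient_step {f : F → ℝ} {L δ : ℝ} (hL : 0 < L)
    (hf : Differentiable ℝ f)
    (hsmooth : ∀ x y, ‖gradient f x - gradient f y‖ ≤ L * ‖x - y‖) {x g : F}
    (hg : ‖g - gradient f x‖ ≤ δ) (hbig : 2 * δ ≤ ‖g‖) :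
    f (x - (1 / (2 * L)) • g) ≤ f x - ‖g‖ ^ 2 / (8 * L) := by
  have hcorr : ‖g‖ ^ 2 / 2 ≤ ⟪gradient f x, g⟫ := by
    have h1 : ⟪gradient f x, g⟫ = ‖g‖ ^ 2 - ⟪g - gradient f x, g⟫ := by
      rw [inner_sub_left, real_inner_self_eq_norm_sq]; ring
    have h2 : ⟪g - gradient f x, g⟫ ≤ δ * ‖g‖ :=
      (real_inner_le_norm _ _).trans (mul_le_mul_of_nonneg_right hg (norm_nonneg _))
    nlinarith [norm_nonneg g]
  have hdesc := le_add_inner_gradient_add_sq hf hsmooth x (-((1 / (2 * L)) • g))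
  rw [← sub_eq_add_neg, inner_neg_right, inner_smul_right, norm_neg, norm_smul,
    Real.norm_of_nonneg (by positivity)] at hdesc
  have key : -(1 / (2 * L) * ⟪gradient f x, g⟫) + L / 2 * (1 / (2 * L) * ‖g‖) ^ 2
      ≤ -(‖g‖ ^ 2 / (8 * L)) := by
    have : (1 / (2 * L)) * (‖g‖ ^ 2 / 2) ≤ 1 / (2 * L) * ⟪gradient f x, g⟫ := by gcongr
    field_simp at this ⊢
    nlinarith
  linarith

/-- `q k` is the paper's `q_{k-1}`, so `q 0 = 0` encodes `q₋₁ = 0`. -/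
structure IsNemirovskiCGRun (f : F → ℝ) (g : F → F) (L : ℝ) (x xhat q : ℕ → F) : Prop where
  q_zero : q 0 = 0
  q_succ : ∀ k, q (k + 1) = q k + g (xhat k)
  xhat_mem : ∀ k, ∃ a b : ℝ, xhat k = x 0 + a • (x k - x 0) + b • q k
  xhat_min : ∀ k (a b : ℝ), f (xhat k) ≤ f (x 0 + a • (x k - x 0) + b • q k)
  x_succ : ∀ k, x (k + 1) = xhat k - (1 / (2 * L)) • g (xhat k)

namespace IsNemirovskiCGRun

variable {f : F → ℝ} {g : F → F} {L δ : ℝ} {x xhat q : ℕ → F}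
  (h : IsNemirovskiCGRun f g L x xhat q) (hf : Differentiable ℝ f)
include h

include hf in
theorem inner_gradient_xhat_eq_zero (k : ℕ) (a b : ℝ) :
    ⟪gradient f (xhat k), a • (x k - x 0) + b • q k⟫ = 0 := by
  obtain ⟨a₀, b₀, hxhat⟩ := h.xhat_mem k
  refine inner_gradient_eq_zero_of_le_add_smul (hf _) fun t => ?_
  convert h.xhat_min k (a₀ + t * a) (b₀ + t * b) using 2
  rw [hxhat, add_smul, add_smul, smul_add, mul_smul, mul_smul]
  abel

include hf in
theorem inner_gradient_q_eq_zero (k : ℕ) : ⟪gradient f (xhat k), q k⟫ = 0 := by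
  simpa using h.inner_gradient_xhat_eq_zero hf k 0 1

include hf in
theorem inner_gradient_sub_eq_zero (k : ℕ) : ⟪gradient f (xhat k), xhat k - x 0⟫ = 0 := by
  obtain ⟨a, b, hxhat⟩ := h.xhat_mem k
  rw [← h.inner_gradient_xhat_eq_zero hf k a b, hxhat, add_assoc, add_sub_cancel_left]

omit [CompleteSpace F] in
theorem le_xhat (k : ℕ) : f (xhat k) ≤ f (x k) := by
  simpa using h.xhat_min k 1 0

omit [CompleteSpace F] in
theorem q_eq_sum (m : ℕ) : q m = ∑ i ∈ range m, g (xhat i) := by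
  induction m with
  | zero => simp [h.q_zero]
  | succ m ih => rw [h.q_succ, ih, sum_range_succ]

variable (hg : ∀ x, ‖g x - gradient f x‖ ≤ δ)
include hf hg

theorem norm_q_le_sqrt_sum_sq_add (m : ℕ) :
    ‖q m‖ ≤ √(∑ i ∈ range m, ‖g (xhat i)‖ ^ 2) + m * δ := by
  refine norm_le_sqrt_sum_sq_add_of_inner_le ((norm_nonneg _).trans (hg 0)) h.q_zero h.q_succ
    (fun k => ?_) m
  calc ⟪q k, g (xhat k)⟫ = ⟪q k, g (xhat k) - gradient f (xhat k)⟫ := by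
        rw [inner_sub_right, real_inner_comm (gradient f (xhat k)),
          h.inner_gradient_q_eq_zero hf, sub_zero]
    _ ≤ ‖q k‖ * ‖g (xhat k) - gradient f (xhat k)‖ := real_inner_le_norm _ _
    _ ≤ δ * ‖q k‖ := by rw [mul_comm]; gcongr; exact hg _

theorem mul_sub_le_inner_add {γ : ℝ} {xstar : F} (hγ : 0 < γ)
    (hquasar : ∀ x, f x + (1 / γ) * ⟪gradient f x, xstar - x⟫ ≤ f xstar) (k : ℕ) :
    γ * (f (xhat k) - f xstar) ≤ ⟪g (xhat k), x 0 - xstar⟫ + δ * ‖x 0 - xstar‖ := by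
  have hq : γ * (f (xhat k) - f xstar) ≤ ⟪gradient f (xhat k), xhat k - xstar⟫ := by
    have := hquasar (xhat k)
    rw [← neg_sub, inner_neg_right] at this
    have := mul_le_mul_of_nonneg_left (show f (xhat k) - f xstar ≤
      1 / γ * ⟪gradient f (xhat k), xhat k - xstar⟫ by linarith) hγ.le
    rwa [← mul_assoc, mul_one_div_cancel hγ.ne', one_mul] at this
  have hshift : ⟪gradient f (xhat k), xhat k - xstar⟫ = ⟪gradient f (xhat k), x 0 - xstar⟫ := by
    rw [← sub_add_sub_cancel (xhat k) (x 0) xstar, inner_add_right,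
      h.inner_gradient_sub_eq_zero hf, zero_add]
  have herr : ⟪gradient f (xhat k) - g (xhat k), x 0 - xstar⟫ ≤ δ * ‖x 0 - xstar‖ :=
    (real_inner_le_norm _ _).trans (by rw [norm_sub_rev]; gcongr; exact hg _)
  rw [inner_sub_left] at herr
  linarith

variable (hL : 0 < L) (hsmooth : ∀ x y, ‖gradient f x - gradient f y‖ ≤ L * ‖x - y‖)
  (hbig : ∀ k, 2 * δ ≤ ‖g (xhat k)‖)
include hL hsmooth hbig

theorem apply_x_succ_le (k : ℕ) :
    f (x (k + 1)) ≤ f (xhat k) - ‖g (xhat k)‖ ^ 2 / (8 * L) := by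
  rw [h.x_succ]
  exact le_sub_of_inexact_gradient_step hL hf hsmooth (hg _) (hbig k)

theorem apply_x_succ_le_xhat (k : ℕ) : f (x (k + 1)) ≤ f (xhat k) := by
  have := h.apply_x_succ_le hf hg hL hsmooth hbig k
  have : 0 ≤ ‖g (xhat k)‖ ^ 2 / (8 * L) := by positivity
  linarith

theorem antitone_apply_x : Antitone (f ∘ x) :=
  antitone_nat_of_succ_le fun k =>
    (h.apply_x_succ_le_xhat hf hg hL hsmooth hbig k).trans (h.le_xhat k)

theorem sum_sq_norm_le (m : ℕ) :
    ∑ i ∈ range m, ‖g (xhat i)‖ ^ 2 ≤ 8 * L * (f (x 0) - f (x m)) := by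
  rw [← sum_range_sub' (fun i => f (x i)), mul_sum]
  refine sum_le_sum fun i _ => ?_
  have := h.apply_x_succ_le hf hg hL hsmooth hbig i
  have := h.le_xhat i
  have : ‖g (xhat i)‖ ^ 2 / (8 * L) ≤ f (x i) - f (x (i + 1)) := by linarith
  rwa [div_le_iff₀ (by positivity), mul_comm] at this

theorem mul_gap_le {γ : ℝ} {xstar : F} (hγ : 0 < γ)
    (hquasar : ∀ x, f x + (1 / γ) * ⟪gradient f x, xstar - x⟫ ≤ f xstar) (T : ℕ) :
    γ * T * (f (x T) - f xstar) ≤ (‖q T‖ + T * δ) * ‖x 0 - xstar‖ := by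
  have hk : ∀ k ∈ range T, γ * (f (x T) - f xstar) ≤
      ⟪g (xhat k), x 0 - xstar⟫ + δ * ‖x 0 - xstar‖ := by
    intro k hk
    have hdec : f (x T) ≤ f (xhat k) :=
      (h.antitone_apply_x hf hg hL hsmooth hbig (mem_range.1 hk)).trans
        (h.apply_x_succ_le_xhat hf hg hL hsmooth hbig k)
    exact (mul_le_mul_of_nonneg_left (by linarith) hγ.le).trans
      (h.mul_sub_le_inner_add hf hg hγ hquasar k)
  have hsum := sum_le_sum hk
  rw [sum_const, card_range, nsmul_eq_mul, sum_add_distrib, ← sum_inner, ← h.q_eq_sum,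
    sum_const, card_range, nsmul_eq_mul] at hsum
  have := real_inner_le_norm (q T) (x 0 - xstar)
  nlinarith

theorem mul_gap_le_sqrt {γ : ℝ} {xstar : F} (hγ : 0 < γ) (hmin : ∀ x, f xstar ≤ f x)
    (hquasar : ∀ x, f x + (1 / γ) * ⟪gradient f x, xstar - x⟫ ≤ f xstar) (T : ℕ) :
    γ * T * (f (x T) - f xstar) ≤
      (√(8 * L * (f (x 0) - f xstar)) + 2 * T * δ) * ‖x 0 - xstar‖ := by
  have hsum : √(∑ i ∈ range T, ‖g (xhat i)‖ ^ 2) ≤ √(8 * L * (f (x 0) - f xstar)) := by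
    refine Real.sqrt_le_sqrt ((h.sum_sq_norm_le hf hg hL hsmooth hbig T).trans ?_)
    nlinarith [hmin (x T)]
  have hq := h.norm_q_le_sqrt_sum_sq_add hf hg T
  exact (h.mul_gap_le hf hg hL hsmooth hbig hγ hquasar T).trans
    (mul_le_mul_of_nonneg_right (by linarith) (norm_nonneg _))

theorem gap_le {γ μ α ε : ℝ} {xstar : F} {T : ℕ} (hγ : 0 < γ) (hμ : 0 < μ) (hα : 0 ≤ α)
    (hε : 0 ≤ ε) (hmin : ∀ x, f xstar ≤ f x)
    (hquasar : ∀ x, f x + (1 / γ) * ⟪gradient f x, xstar - x⟫ ≤ f xstar)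
    (hgrowth : ∀ x, μ / 2 * ‖x - xstar‖ ^ 2 ≤ f x - f xstar)
    (hδε : δ ^ 2 ≤ γ ^ 2 * α ^ 2 * μ * ε / 32) (hT : 8 * √(L / μ) ≤ (1 - α) * γ * T) :
    f (x T) - f xstar ≤
      (1 - α) / 2 * (f (x 0) - f xstar) + α / 2 * √(ε * (f (x 0) - f xstar)) := by
  set Δ₀ := f (x 0) - f xstar
  set R := ‖x 0 - xstar‖
  have hΔ₀ : 0 ≤ Δ₀ := sub_nonneg.2 (hmin _)
  have hR : R ^ 2 ≤ 2 * Δ₀ / μ := by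
    rw [le_div_iff₀ hμ]
    nlinarith [hgrowth (x 0)]
  have hsmoothR : √(8 * L * Δ₀) * R ≤ 4 * Δ₀ * √(L / μ) := by
    rw [← pow_le_pow_iff_left₀ (by positivity) (by positivity) two_ne_zero, mul_pow, mul_pow,
      Real.sq_sqrt (by positivity), Real.sq_sqrt (by positivity)]
    calc 8 * L * Δ₀ * R ^ 2 ≤ 8 * L * Δ₀ * (2 * Δ₀ / μ) := by gcongr
      _ = (4 * Δ₀) ^ 2 * (L / μ) := by field_simp; ring
  have herrR : δ * R ≤ γ * α / 4 * √(ε * Δ₀) := by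
    have hδ : 0 ≤ δ := (norm_nonneg _).trans (hg 0)
    rw [← pow_le_pow_iff_left₀ (by positivity) (by positivity) two_ne_zero, mul_pow, mul_pow,
      Real.sq_sqrt (by positivity)]
    calc δ ^ 2 * R ^ 2 ≤ γ ^ 2 * α ^ 2 * μ * ε / 32 * (2 * Δ₀ / μ) := by gcongr
      _ = (γ * α / 4) ^ 2 * (ε * Δ₀) := by field_simp; ring
  have hγT : 0 < γ * T := by
    have hpos : 0 < (1 - α) * (γ * T) := by
      rw [← mul_assoc]
      exact lt_of_lt_of_le (by positivity) hT
    exact lt_of_le_of_ne (by positivity) fun h0 => by simp [← h0] at hpos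
  refine le_of_mul_le_mul_left ?_ hγT
  calc γ * T * (f (x T) - f xstar) ≤ (√(8 * L * Δ₀) + 2 * T * δ) * R :=
        h.mul_gap_le_sqrt hf hg hL hsmooth hbig hγ hmin hquasar T
    _ = √(8 * L * Δ₀) * R + 2 * T * (δ * R) := by ring
    _ ≤ 4 * Δ₀ * √(L / μ) + 2 * T * (γ * α / 4 * √(ε * Δ₀)) := by gcongr
    _ ≤ (1 - α) * γ * T * Δ₀ / 2 + 2 * T * (γ * α / 4 * √(ε * Δ₀)) := by
        nlinarith [mul_le_mul_of_nonneg_right hT hΔ₀]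
    _ = γ * T * ((1 - α) / 2 * Δ₀ + α / 2 * √(ε * Δ₀)) := by ring

end IsNemirovskiCGRun

theorem cg_restarts_convergence_general (n : ℕ) (f : EuclideanSpace ℝ (Fin n) → ℝ)
    (L γ μ δ₁ α ε : ℝ) (hL : 0 < L) (hγ0 : 0 < γ) (hμ : 0 < μ)
    (hα0 : 0 < α) (hα1 : α < 1)
    (hf : Differentiable ℝ f)
    (hsmooth : ∀ x y, ‖gradient f x - gradient f y‖ ≤ L * ‖x - y‖)
    (xstar : EuclideanSpace ℝ (Fin n)) (hmin : ∀ x, f xstar ≤ f x)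
    (hquasar : ∀ x, f x + (1 / γ) * ⟪gradient f x, xstar - x⟫ ≤ f xstar)
    (hgrowth : ∀ x, μ / 2 * ‖x - xstar‖ ^ 2 ≤ f x - f xstar)
    (g : EuclideanSpace ℝ (Fin n) → EuclideanSpace ℝ (Fin n))
    (hg : ∀ x, ‖g x - gradient f x‖ ≤ δ₁)
    (x₀ : EuclideanSpace ℝ (Fin n))
    (hgap : f x₀ - f xstar ≤ 1)
    (hε0 : 0 < ε)
    (hδε : δ₁ ^ 2 ≤ γ ^ 2 * α ^ 2 * μ * ε / 32)
    (T K : ℕ)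
    (hT : T = ⌈(8 / γ) * Real.sqrt (L / μ) * Real.sqrt (1 + α) / (1 - α)⌉₊)
    (hK : K = ⌈(2 / (1 - α)) * Real.log (1 / ε)⌉₊)
    (y : ℕ → EuclideanSpace ℝ (Fin n)) (hy0 : y 0 = x₀)
    (x xhat q : ℕ → ℕ → EuclideanSpace ℝ (Fin n))
    (hx0 : ∀ j, x j 0 = y j)
    (hq0 : ∀ j, q j 0 = 0)
    (hqs : ∀ j k, q j (k + 1) = q j k + g (xhat j k))
    (hxhat_mem : ∀ j k, ∃ a b : ℝ, xhat j k = x j 0 + a • (x j k - x j 0) + b • q j k)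
    (hxhat_min : ∀ j k, ∀ a b : ℝ,
      f (xhat j k) ≤ f (x j 0 + a • (x j k - x j 0) + b • q j k))
    (hxs : ∀ j k, x j (k + 1) = xhat j k - (1 / (2 * L)) • g (xhat j k))
    (hbig : ∀ j k, 2 * δ₁ ≤ ‖g (xhat j k)‖)
    (hrestart : ∀ j, y (j + 1) = x j T) :
    f (y K) - f xstar ≤ ε := by
  have hrun (j : ℕ) : IsNemirovskiCGRun f g L (x j) (xhat j) (q j) :=
    ⟨hq0 j, hqs j, hxhat_mem j, hxhat_min j, hxs j⟩
  have hT' := eight_sqrt_le_of_eq_ceil hγ0 hα0.le hα1 hT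
  have hstep (j : ℕ) : f (y (j + 1)) - f xstar ≤
      (1 - α) / 2 * (f (y j) - f xstar) + α / 2 * √(ε * (f (y j) - f xstar)) := by
    rw [hrestart, ← hx0]
    exact (hrun j).gap_le hf hg hL hsmooth (hbig j) hγ0 hμ hα0.le hε0.le hmin hquasar hgrowth
      hδε hT'
  have hK' : (1 / 2 : ℝ) ^ K ≤ ε := hK ▸ half_pow_ceil_le hα0.le hα1 hε0
  calc f (y K) - f xstar ≤ max ε ((1 / 2) ^ K * (f (y 0) - f xstar)) :=
        le_max_half_pow_of_contraction hα0.le hα1.le hε0.le (fun j => sub_nonneg.2 (hmin _))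
          hstep K
    _ ≤ ε := max_le le_rfl <| by
        rw [hy0]
        nlinarith [pow_nonneg (by norm_num : (0 : ℝ) ≤ 1 / 2) K, hmin x₀]

/-- Convergence of the restarted Nemirovski Conjugate Gradient method with a
δ₁-inexact gradient. `x j`, `xhat j`, `q j` are the iterates of the `j`-th restart,
started from `y j` (with `q j 0 = 0` standing for `q_{-1} = 0`), and
`y (j+1) = x j T` is the output of the `j`-th restart. -/
theorem cg_restarts_convergence (n : ℕ) (f : EuclideanSpace ℝ (Fin n) → ℝ)
    (L γ μ δ₁ α ε : ℝ) (hL : 0 < L) (hγ0 : 0 < γ) (hγ1 : γ ≤ 1) (hμ : 0 < μ)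
    (hδ₁ : 0 ≤ δ₁) (hα0 : 0 < α) (hα1 : α < 1)
    (hf : Differentiable ℝ f)
    (hsmooth : ∀ x y, ‖gradient f x - gradient f y‖ ≤ L * ‖x - y‖)
    (xstar : EuclideanSpace ℝ (Fin n)) (hmin : ∀ x, f xstar ≤ f x)
    (hquasar : ∀ x, f x + (1 / γ) * ⟪gradient f x, xstar - x⟫ ≤ f xstar)
    (hgrowth : ∀ x, μ / 2 * ‖x - xstar‖ ^ 2 ≤ f x - f xstar)
    (g : EuclideanSpace ℝ (Fin n) → EuclideanSpace ℝ (Fin n))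
    (hg : ∀ x, ‖g x - gradient f x‖ ≤ δ₁)
    (x₀ : EuclideanSpace ℝ (Fin n))
    (hgap : f x₀ - f xstar ≤ 1)
    (hε0 : 0 < ε) (hε1 : ε ≤ f x₀ - f xstar)
    (hδε : δ₁ ^ 2 ≤ γ ^ 2 * α ^ 2 * μ * ε / 32)
    (T K : ℕ)
    (hT : T = ⌈(8 / γ) * Real.sqrt (L / μ) * Real.sqrt (1 + α) / (1 - α)⌉₊)
    (hK : K = ⌈(2 / (1 - α)) * Real.log (1 / ε)⌉₊)
    (y : ℕ → EuclideanSpace ℝ (Fin n)) (hy0 : y 0 = x₀)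
    (x xhat q : ℕ → ℕ → EuclideanSpace ℝ (Fin n))
    (hx0 : ∀ j, x j 0 = y j)
    (hq0 : ∀ j, q j 0 = 0)
    (hqs : ∀ j k, q j (k + 1) = q j k + g (xhat j k))
    (hxhat_mem : ∀ j k, ∃ a b : ℝ, xhat j k = x j 0 + a • (x j k - x j 0) + b • q j k)
    (hxhat_min : ∀ j k, ∀ a b : ℝ,
      f (xhat j k) ≤ f (x j 0 + a • (x j k - x j 0) + b • q j k))
    (hxs : ∀ j k, x j (k + 1) = xhat j k - (1 / (2 * L)) • g (xhat j k))
    (hbig : ∀ j k, 2 * δ₁ ≤ ‖g (xhat j k)‖)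
    (hrestart : ∀ j, y (j + 1) = x j T) :
    f (y K) - f xstar ≤ ε :=
  cg_restarts_convergence_general n f L γ μ δ₁ α ε hL hγ0 hμ hα0 hα1 hf hsmooth xstar hmin hquasar
    hgrowth g hg x₀ hgap hε0 hδε T K hT hK y hy0 x xhat q hx0 hq0 hqs hxhat_mem hxhat_min hxs hbig
    hrestart
end
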